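/- Let V, W be affine real algebraic varieties, A ⊆ V a constructible subset, and {U₁,…,Uᵣ} a cover of A by subsets that are open in the Euclidean topology on A and constructible in V. Then a map f : A → W is regulous if and only if each restriction f|_{Uᵢ} is regulous. -/

import Mathlib

open MvPolynomial Set

/-- Points of the ambient affine space `ℝ^m`. -/
abbrev Pt (m : ℕ) : Type := Fin m → ℝ

/-- A subset of `ℝ^m` is Zariski closed if it is the common zero set
of a family of real polynomials. -/
def ZarClosed {m : ℕ} (Z : Set (Pt m)) : Prop :=
  ∃ S : Set (MvPolynomial (Fin m) ℝ), Z = {x | ∀ p ∈ S, eval x p = 0}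

/-- Zariski locally closed subsets of `ℝ^m`. -/
def ZarLocClosed {m : ℕ} (L : Set (Pt m)) : Prop :=
  ∃ Z Z' : Set (Pt m), ZarClosed Z ∧ ZarClosed Z' ∧ L = Z \ Z'

/-- A set is constructible if it is a finite union of Zariski locally closed sets. -/
def Constructible {m : ℕ} (A : Set (Pt m)) : Prop :=
  ∃ (k : ℕ) (L : Fin k → Set (Pt m)), (∀ i, ZarLocClosed (L i)) ∧ A = ⋃ i, L i

/-- A set is irreducible (for the Zariski topology). -/
def ZarIrreducible {m : ℕ} (S : Set (Pt m)) : Prop :=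
  S.Nonempty ∧ ∀ Z Z' : Set (Pt m), ZarClosed Z → ZarClosed Z' → S ⊆ Z ∪ Z' →
    S ⊆ Z ∨ S ⊆ Z'

/-- A stratification of `A`: a finite family of pairwise disjoint Zariski locally
closed sets whose union is `A`. -/
def IsStratification {m : ℕ} (A : Set (Pt m)) {k : ℕ} (S : Fin k → Set (Pt m)) : Prop :=
  (∀ i, ZarLocClosed (S i)) ∧ (Pairwise fun i j => Disjoint (S i) (S j)) ∧ (⋃ i, S i) = A

/-- `f` is a regular function on `A ⊆ ℝ^m`: a quotient of polynomials whose
denominator does not vanish on `A`. -/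
def RegularFnOn {m : ℕ} (A : Set (Pt m)) (f : Pt m → ℝ) : Prop :=
  ∃ p q : MvPolynomial (Fin m) ℝ, ∀ x ∈ A, eval x q ≠ 0 ∧ f x * eval x q = eval x p

/-- A regular map `A → ℝ^k` (componentwise regular). -/
def RegularMapOn {m k : ℕ} (A : Set (Pt m)) (f : Pt m → Pt k) : Prop :=
  ∀ j, RegularFnOn A fun x => f x j

/-- A regulous function on `A`: Euclidean-continuous on `A` and regular on each
stratum of some stratification of `A`. -/
def RegulousFnOn {m : ℕ} (A : Set (Pt m)) (f : Pt m → ℝ) : Prop :=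
  ContinuousOn f A ∧
    ∃ (k : ℕ) (S : Fin k → Set (Pt m)), IsStratification A S ∧ ∀ i, RegularFnOn (S i) f

/-- A regulous map `A → ℝ^k`. -/
def RegulousMapOn {m k : ℕ} (A : Set (Pt m)) (f : Pt m → Pt k) : Prop :=
  ContinuousOn f A ∧
    ∃ (r : ℕ) (S : Fin r → Set (Pt m)), IsStratification A S ∧ ∀ i, RegularMapOn (S i) f

/-- `U` is an open subset of `X` in the constructible topology: the complement in `X`
of a Euclidean-closed constructible set. -/
def ConstructibleOpenIn {m : ℕ} (X U : Set (Pt m)) : Prop :=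
  U ⊆ X ∧ ∃ F : Set (Pt m), Constructible F ∧ IsClosed F ∧ U = X \ F

/-!
Both directions reduce to one refinement fact: the union of finitely many Zariski locally
closed sets `Z i \ Z' i` is stratified by the atoms of the Boolean algebra generated by
the closed sets `Z i`, `Z' i` (each atom is locally closed, and lies in some `Z i \ Z' i`
as soon as it meets it). Restricting a stratification of `A` to a constructible `U ⊆ A`
applies this to the sets `S j ∩ M l`; gluing stratifications of the `U i` applies it to
all their strata at once, so no disjointness has to be arranged by hand. Continuity is
local because the `U i` are open in `A`.
-/

section

variable {m : ℕ}

theorem ZarClosed.iInter {ι : Sort*} {F : ι → Set (Pt m)} (hF : ∀ i, ZarClosed (F i)) :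
    ZarClosed (⋂ i, F i) := by
  choose S hS using hF
  refine ⟨⋃ i, S i, ?_⟩
  ext x
  simp only [mem_iInter, hS, mem_ofPred_eq, mem_iUnion, forall_exists_index]
  exact ⟨fun h p i hp => h i p hp, fun h i p hp => h p i hp⟩

theorem ZarClosed.iUnion {ι : Type*} [Finite ι] {F : ι → Set (Pt m)}
    (hF : ∀ i, ZarClosed (F i)) : ZarClosed (⋃ i, F i) := by
  have := Fintype.ofFinite ι
  choose S hS using hF
  refine ⟨{q | ∃ p : ι → MvPolynomial (Fin m) ℝ, (∀ i, p i ∈ S i) ∧ q = ∏ i, p i}, ?_⟩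
  ext x
  simp only [mem_iUnion, hS, mem_ofPred_eq, forall_exists_index, and_imp]
  constructor
  · rintro ⟨i, hi⟩ _ p hp rfl
    rw [map_prod]
    exact Finset.prod_eq_zero (Finset.mem_univ i) (hi _ (hp i))
  · intro h
    by_contra! hx
    choose p hp hpx using hx
    have := h _ p hp rfl
    rw [map_prod] at this
    exact Finset.prod_ne_zero_iff.2 (fun i _ => hpx i) this

theorem ZarClosed.zarLocClosed {Z : Set (Pt m)} (hZ : ZarClosed Z) : ZarLocClosed Z :=
  ⟨Z, ∅, hZ, ⟨{1}, by simp⟩, (sdiff_empty).symm⟩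

theorem ZarClosed.zarLocClosed_compl {Z : Set (Pt m)} (hZ : ZarClosed Z) :
    ZarLocClosed Zᶜ :=
  ⟨univ, Z, ⟨∅, by simp⟩, hZ, compl_eq_univ_sdiff Z⟩

theorem ZarLocClosed.iInter {ι : Type*} [Finite ι] {L : ι → Set (Pt m)}
    (hL : ∀ i, ZarLocClosed (L i)) : ZarLocClosed (⋂ i, L i) := by
  choose Z Z' hZ hZ' hL using hL
  refine ⟨⋂ i, Z i, ⋃ i, Z' i, ZarClosed.iInter hZ, ZarClosed.iUnion hZ', ?_⟩
  ext x
  simp only [hL, mem_iInter, mem_sdiff, mem_iUnion, not_exists]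
  exact ⟨fun h => ⟨fun i => (h i).1, fun i => (h i).2⟩, fun h i => ⟨h.1 i, h.2 i⟩⟩

theorem ZarLocClosed.inter {L M : Set (Pt m)} (hL : ZarLocClosed L) (hM : ZarLocClosed M) :
    ZarLocClosed (L ∩ M) := by
  rw [inter_eq_iInter]
  exact ZarLocClosed.iInter (Bool.forall_bool.2 ⟨hM, hL⟩)

/-- The atom with membership pattern `σ` of the Boolean algebra generated by the `F j`. -/
def zarAtom {κ : Type*} (F : κ → Set (Pt m)) (σ : κ → Prop) : Set (Pt m) :=
  {y | ∀ j, y ∈ F j ↔ σ j}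

theorem zarLocClosed_zarAtom {κ : Type*} [Finite κ] {F : κ → Set (Pt m)}
    (hF : ∀ j, ZarClosed (F j)) (σ : κ → Prop) : ZarLocClosed (zarAtom F σ) := by
  have hatom : zarAtom F σ = ⋂ j, {y | y ∈ F j ↔ σ j} := by
    ext y; simp [zarAtom]
  rw [hatom]
  refine ZarLocClosed.iInter fun j => ?_
  by_cases hσ : σ j
  · convert (hF j).zarLocClosed using 1
    ext y; simp [hσ]
  · convert (hF j).zarLocClosed_compl using 1
    ext y; simp [hσ]

theorem pairwise_disjoint_zarAtom {κ : Type*} (F : κ → Set (Pt m)) :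
    Pairwise fun σ τ => Disjoint (zarAtom F σ) (zarAtom F τ) := by
  intro σ τ hστ
  refine Set.disjoint_left.2 fun y hσ hτ => hστ (funext fun j => propext ?_)
  exact (hσ j).symm.trans (hτ j)

theorem exists_stratification_of_zarAtom {κ : Type*} [Finite κ] {F : κ → Set (Pt m)}
    (hF : ∀ j, ZarClosed (F j)) {C : Set (Pt m)} {P : Set (Pt m) → Prop}
    (hC : ∀ x ∈ C, zarAtom F (fun j => x ∈ F j) ⊆ C ∧ P (zarAtom F (fun j => x ∈ F j))) :
    ∃ (n : ℕ) (S : Fin n → Set (Pt m)), IsStratification C S ∧ ∀ i, P (S i) := by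
  let T := {σ : κ → Prop // ∃ x ∈ C, σ = fun j => x ∈ F j}
  let e := Finite.equivFin T
  refine ⟨Nat.card T, fun i => zarAtom F (e.symm i).1,
    ⟨fun i => zarLocClosed_zarAtom hF _, ?_, ?_⟩, fun i => ?_⟩
  · exact fun i j hij =>
      pairwise_disjoint_zarAtom F fun h => hij (e.symm.injective (Subtype.ext h))
  · refine subset_antisymm (iUnion_subset fun i => ?_) fun x hx => ?_
    · obtain ⟨x, hx, hσ⟩ := (e.symm i).2
      rw [hσ]
      exact (hC x hx).1
    · exact mem_iUnion.2 ⟨e ⟨_, x, hx, rfl⟩, by simp [zarAtom]⟩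
  · obtain ⟨x, hx, hσ⟩ := (e.symm i).2
    simp only [hσ]
    exact (hC x hx).2

theorem exists_stratification_iUnion {ι : Type*} [Finite ι] {L : ι → Set (Pt m)}
    (hL : ∀ i, ZarLocClosed (L i)) {P : Set (Pt m) → Prop}
    (hP : Antitone P) (hPL : ∀ i, P (L i)) :
    ∃ (n : ℕ) (S : Fin n → Set (Pt m)), IsStratification (⋃ i, L i) S ∧ ∀ i, P (S i) := by
  choose Z Z' hZ hZ' hL using hL
  refine exists_stratification_of_zarAtom (F := Sum.elim Z Z')
    (Sum.forall.2 ⟨hZ, hZ'⟩) fun x hx => ?_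
  obtain ⟨i, hi⟩ := mem_iUnion.1 hx
  have hatom : zarAtom (Sum.elim Z Z') (fun j => x ∈ Sum.elim Z Z' j) ⊆ L i := by
    intro y hy
    rw [hL] at hi ⊢
    exact ⟨(hy (.inl i)).2 hi.1, fun hy' => hi.2 ((hy (.inr i)).1 hy')⟩
  exact ⟨hatom.trans (subset_iUnion L i), hP hatom (hPL i)⟩

variable {k : ℕ}

theorem RegularMapOn.mono {A B : Set (Pt m)} {f : Pt m → Pt k} (hf : RegularMapOn A f)
    (hBA : B ⊆ A) : RegularMapOn B f := fun j =>
  let ⟨p, q, hpq⟩ := hf j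
  ⟨p, q, fun x hx => hpq x (hBA hx)⟩

def PiecewiseRegularOn (A : Set (Pt m)) (f : Pt m → Pt k) : Prop :=
  ∃ (r : ℕ) (S : Fin r → Set (Pt m)), IsStratification A S ∧ ∀ i, RegularMapOn (S i) f

theorem PiecewiseRegularOn.mono_constructible {A C : Set (Pt m)} {f : Pt m → Pt k}
    (hf : PiecewiseRegularOn A f) (hC : Constructible C) (hCA : C ⊆ A) :
    PiecewiseRegularOn C f := by
  obtain ⟨r, S, ⟨hS, -, hSA⟩, hfS⟩ := hf
  obtain ⟨n, M, hM, rfl⟩ := hC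
  have hcover : (⋃ p : Fin r × Fin n, S p.1 ∩ M p.2) = ⋃ l, M l := by
    rw [iUnion_prod', ← iUnion_inter_iUnion, hSA, inter_eq_right.2 hCA]
  rw [← hcover]
  exact exists_stratification_iUnion (P := (RegularMapOn · f))
    (fun p : Fin r × Fin n => (hS p.1).inter (hM p.2))
    (fun _ _ hst hf => hf.mono hst) fun p => (hfS p.1).mono inter_subset_left

theorem piecewiseRegularOn_iUnion {ι : Type*} [Finite ι] {U : ι → Set (Pt m)}
    {f : Pt m → Pt k} (hf : ∀ i, PiecewiseRegularOn (U i) f) :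
    PiecewiseRegularOn (⋃ i, U i) f := by
  choose r S hS hfS using hf
  have hcover : (⋃ p : Σ i, Fin (r i), S p.1 p.2) = ⋃ i, U i := by
    rw [iUnion_sigma]
    exact iUnion_congr fun i => (hS i).2.2
  rw [← hcover]
  exact exists_stratification_iUnion (P := (RegularMapOn · f))
    (fun p : Σ i, Fin (r i) => (hS p.1).1 p.2)
    (fun _ _ hst hf => hf.mono hst) fun p => hfS p.1 p.2

end

theorem stmt2_general {m k : ℕ} (A : Set (Pt m))
    (r : ℕ) (U : Fin r → Set (Pt m))
    (hUc : ∀ i, Constructible (U i))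
    (hUo : ∀ i, ∃ O : Set (Pt m), IsOpen O ∧ U i = A ∩ O)
    (hcov : A ⊆ ⋃ i, U i)
    (f : Pt m → Pt k) :
    RegulousMapOn A f ↔ ∀ i, RegulousMapOn (U i) f := by
  have hUA : ∀ i, U i ⊆ A := fun i => by
    obtain ⟨O, -, hUi⟩ := hUo i
    exact hUi ▸ inter_subset_left
  refine ⟨fun hf i =>
      ⟨hf.1.mono (hUA i), PiecewiseRegularOn.mono_constructible hf.2 (hUc i) (hUA i)⟩,
    fun hf => ⟨continuousOn_of_locally_continuousOn fun x hx => ?_, ?_⟩⟩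
  · obtain ⟨i, hi⟩ := mem_iUnion.1 (hcov hx)
    obtain ⟨O, hO, hUi⟩ := hUo i
    exact ⟨O, hO, (hUi ▸ hi).2, hUi ▸ (hf i).1⟩
  · rw [hcov.antisymm (iUnion_subset hUA)]
    exact piecewiseRegularOn_iUnion fun i => (hf i).2

/-- Regulousness is local with respect to finite covers of `A` by
Euclidean-open constructible subsets. -/
theorem stmt2 {m k : ℕ} (A : Set (Pt m)) (hA : Constructible A)
    (W : Set (Pt k)) (hW : ZarClosed W)
    (r : ℕ) (U : Fin r → Set (Pt m))
    (hUc : ∀ i, Constructible (U i))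
    (hUo : ∀ i, ∃ O : Set (Pt m), IsOpen O ∧ U i = A ∩ O)
    (hcov : A ⊆ ⋃ i, U i)
    (f : Pt m → Pt k) (hfW : ∀ x ∈ A, f x ∈ W) :
    RegulousMapOn A f ↔ ∀ i, RegulousMapOn (U i) f :=
  stmt2_general A r U hUc hUo hcov f
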